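/- If X and Y are disjoint subsets of Cantor space each admitting a ν-measurement of the splitting-operator form in R, then X ∪ Y admits one as well, and the measure of X ∪ Y in R equals the measure of X in R plus the measure of Y in R. More generally, for arbitrary measurable X, Y: ν(X ∪ Y | R) + ν(X ∩ Y | R) = ν(X | R) + ν(Y | R). -/
import Mathlib

def IsProbMeasure (ν : List Bool → ℝ) : Prop :=
  ν [] = 1 ∧ (∀ w, 0 ≤ ν w ∧ ν w ≤ 1) ∧
    ∀ w, ν w = ν (w ++ [false]) + ν (w ++ [true])

def IsMartingale (ν d : List Bool → ℝ) : Prop :=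
  (∀ w, 0 ≤ d w) ∧
    ∀ w, d w * ν w =
      d (w ++ [false]) * ν (w ++ [false]) + d (w ++ [true]) * ν (w ++ [true])

def seqPrefix (A : ℕ → Bool) (n : ℕ) : List Bool := List.ofFn (fun i : Fin n => A i)

def S1 (d : List Bool → ℝ) : Set (ℕ → Bool) := {A | ∃ n, 1 ≤ d (seqPrefix A n)}

/-- A ν-splitting measurement of `X` in `R`. -/
def IsMeasurement (ν : List Bool → ℝ) (R X : Set (ℕ → Bool))
    (Φ : ℕ → (List Bool → ℝ) → (List Bool → ℝ) × (List Bool → ℝ)) : Prop :=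
  ∀ r d, IsMartingale ν d →
    IsMartingale ν (Φ r d).1 ∧ IsMartingale ν (Φ r d).2 ∧
    R ∩ X ∩ S1 d ⊆ S1 (Φ r d).1 ∧ (R \ X) ∩ S1 d ⊆ S1 (Φ r d).2 ∧
    (Φ r d).1 [] + (Φ r d).2 [] ≤ d [] + (1/2 : ℝ) ^ r

/-- The measure of `X` in `R` determined by a measurement `Φ`:
`inf_r Φ⁺_r(𝟏)(λ)`. -/
noncomputable def measInit
    (Φ : ℕ → (List Bool → ℝ) → (List Bool → ℝ) × (List Bool → ℝ)) : ℝ :=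
  ⨅ r : ℕ, (Φ r (fun _ => 1)).1 []

lemma mart_add {ν d e : List Bool → ℝ} (hd : IsMartingale ν d) (he : IsMartingale ν e) :
    IsMartingale ν (fun w => d w + e w) := by
  refine ⟨fun w => add_nonneg (hd.1 w) (he.1 w), fun w => ?_⟩
  simp only [add_mul]
  rw [hd.2 w, he.2 w]; ring

lemma mart_one {ν : List Bool → ℝ} (hν : IsProbMeasure ν) :
    IsMartingale ν (fun _ => 1) := by
  refine ⟨fun _ => zero_le_one, fun w => ?_⟩
  simpa using hν.2.2 w

lemma S1_one (A : ℕ → Bool) : A ∈ S1 (fun _ => (1:ℝ)) := ⟨0, le_refl 1⟩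

lemma S1_add_left {d e : List Bool → ℝ} (he : ∀ w, 0 ≤ e w) :
    S1 d ⊆ S1 (fun w => d w + e w) :=
  fun _ ⟨n, hn⟩ => ⟨n, le_trans hn (le_add_of_nonneg_right (he _))⟩

lemma S1_add_right {d e : List Bool → ℝ} (hd : ∀ w, 0 ≤ d w) :
    S1 e ⊆ S1 (fun w => d w + e w) :=
  fun _ ⟨n, hn⟩ => ⟨n, le_trans hn (le_add_of_nonneg_left (hd _))⟩

lemma eps_le {a b : ℝ} (h : ∀ s : ℕ, a ≤ b + (1/2)^s) : a ≤ b := by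
  by_contra hlt
  push_neg at hlt
  obtain ⟨n, hn⟩ := exists_pow_lt_of_lt_one (by linarith : (0:ℝ) < a - b)
    (by norm_num : (1/2:ℝ) < 1)
  have := h n; linarith

/-- The set of initial values of martingales succeeding on `R ∩ Z`. -/
def covSet (ν : List Bool → ℝ) (R Z : Set (ℕ → Bool)) : Set ℝ :=
  {x | ∃ p, IsMartingale ν p ∧ R ∩ Z ⊆ S1 p ∧ p [] = x}

lemma covSet_nonempty {ν : List Bool → ℝ} (hν : IsProbMeasure ν)
    (R Z : Set (ℕ → Bool)) : (covSet ν R Z).Nonempty :=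
  ⟨1, fun _ => 1, mart_one hν, fun A _ => S1_one A, rfl⟩

lemma covSet_bdd (ν : List Bool → ℝ) (R Z : Set (ℕ → Bool)) :
    BddBelow (covSet ν R Z) := by
  refine ⟨0, ?_⟩
  rintro x ⟨p, hp, _, rfl⟩
  exact hp.1 []

lemma covSet_inf_nonneg {ν : List Bool → ℝ} (hν : IsProbMeasure ν)
    (R Z : Set (ℕ → Bool)) : 0 ≤ sInf (covSet ν R Z) := by
  refine le_csInf (covSet_nonempty hν R Z) ?_
  rintro x ⟨p, hp, _, rfl⟩
  exact hp.1 []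

/-- Any measurement of `Z` in `R` computes the canonical value `sInf (covSet ν R Z)`. -/
lemma meas_eq {ν : List Bool → ℝ} {R Z : Set (ℕ → Bool)} (hν : IsProbMeasure ν)
    (hMC : ∀ d, IsMartingale ν d → R ⊆ S1 d → 1 ≤ d [])
    {Θ : ℕ → (List Bool → ℝ) → (List Bool → ℝ) × (List Bool → ℝ)}
    (hΘ : IsMeasurement ν R Z Θ) :
    measInit Θ = sInf (covSet ν R Z) := by
  have hone : IsMartingale ν (fun _ => 1) := mart_one hν
  have hterm : ∀ r, (Θ r (fun _ => 1)).1 [] ∈ covSet ν R Z := by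
    intro r
    obtain ⟨h1, _, hc1, _, _⟩ := hΘ r _ hone
    exact ⟨_, h1, fun A hA => hc1 ⟨hA, S1_one A⟩, rfl⟩
  have hbdd : BddBelow (Set.range fun r => (Θ r (fun _ => (1:ℝ))).1 []) := by
    refine ⟨0, ?_⟩
    rintro x ⟨r, rfl⟩
    exact (hΘ r _ hone).1.1 []
  refine le_antisymm ?_ (le_ciInf fun r => csInf_le (covSet_bdd ν R Z) (hterm r))
  refine le_csInf ⟨_, hterm 0⟩ ?_
  rintro x ⟨p, hp, hcov, rfl⟩
  refine eps_le ?_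
  intro s
  obtain ⟨_, h2, _, hc2, hv⟩ := hΘ s _ hone
  have hv' : (Θ s (fun _ => 1)).1 [] + (Θ s (fun _ => 1)).2 [] ≤ 1 + (1/2:ℝ)^s := by
    simpa using hv
  have hmc : 1 ≤ p [] + (Θ s (fun _ => 1)).2 [] := by
    have := hMC (fun w => p w + (Θ s (fun _ => 1)).2 w) (mart_add hp h2) ?_
    · simpa using this
    · intro A hA
      by_cases hz : A ∈ Z
      · exact S1_add_left h2.1 (hcov ⟨hA, hz⟩)
      · exact S1_add_right hp.1 (hc2 ⟨⟨hA, hz⟩, S1_one A⟩)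
  have hfin : (Θ s (fun _ => 1)).1 [] ≤ p [] + (1/2:ℝ)^s := by linarith
  exact le_trans (ciInf_le hbdd s) hfin

lemma mval_ineq {ν : List Bool → ℝ} {R A B C D : Set (ℕ → Bool)} (hν : IsProbMeasure ν)
    (key : ∀ x ∈ covSet ν R A, ∀ y ∈ covSet ν R B, ∀ s : ℕ,
      sInf (covSet ν R C) + sInf (covSet ν R D) ≤ x + y + (1/2)^s) :
    sInf (covSet ν R C) + sInf (covSet ν R D) ≤
      sInf (covSet ν R A) + sInf (covSet ν R B) := by
  have h1 : ∀ x ∈ covSet ν R A, ∀ y ∈ covSet ν R B,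
      sInf (covSet ν R C) + sInf (covSet ν R D) ≤ x + y :=
    fun x hx y hy => eps_le (key x hx y hy)
  have h2 : ∀ x ∈ covSet ν R A,
      sInf (covSet ν R C) + sInf (covSet ν R D) - sInf (covSet ν R B) ≤ x := by
    intro x hx
    have : sInf (covSet ν R C) + sInf (covSet ν R D) - x ≤ sInf (covSet ν R B) :=
      le_csInf (covSet_nonempty hν R B) (fun y hy => by linarith [h1 x hx y hy])
    linarith
  have h3 := le_csInf (covSet_nonempty hν R A) h2
  linarith

lemma pow_half_step (r : ℕ) : (1/2:ℝ)^(r+1) + (1/2:ℝ)^(r+2) ≤ (1/2:ℝ)^r := by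
  have h0 : (0:ℝ) ≤ (1/2:ℝ)^r := by positivity
  have : (1/2:ℝ)^(r+1) + (1/2:ℝ)^(r+2) = (3/4) * (1/2:ℝ)^r := by ring
  linarith

theorem stmt12 (ν : List Bool → ℝ) (hν : IsProbMeasure ν)
    (R X Y : Set (ℕ → Bool))
    -- Measure Conservation for the class of all ν-martingales over R:
    (hMC : ∀ d, IsMartingale ν d → R ⊆ S1 d → 1 ≤ d [])
    (Φ Ψ : ℕ → (List Bool → ℝ) → (List Bool → ℝ) × (List Bool → ℝ))
    (hΦ : IsMeasurement ν R X Φ) (hΨ : IsMeasurement ν R Y Ψ) :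
    ∃ Θu Θi, IsMeasurement ν R (X ∪ Y) Θu ∧ IsMeasurement ν R (X ∩ Y) Θi ∧
      measInit Θu + measInit Θi = measInit Φ + measInit Ψ ∧
      (Disjoint X Y → measInit Θu = measInit Φ + measInit Ψ) := by
  classical
  set Θu : ℕ → (List Bool → ℝ) → (List Bool → ℝ) × (List Bool → ℝ) :=
    fun r d => ((fun w => (Φ (r+1) d).1 w + (Ψ (r+2) (Φ (r+1) d).2).1 w),
                (Ψ (r+2) (Φ (r+1) d).2).2) with hΘudef
  set Θi : ℕ → (List Bool → ℝ) → (List Bool → ℝ) × (List Bool → ℝ) :=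
    fun r d => ((Ψ (r+2) (Φ (r+1) d).1).1,
                (fun w => (Φ (r+1) d).2 w + (Ψ (r+2) (Φ (r+1) d).1).2 w)) with hΘidef
  have hΘu : IsMeasurement ν R (X ∪ Y) Θu := by
    intro r d hd
    obtain ⟨hp1, hp2, hc1, hc2, hv⟩ := hΦ (r+1) d hd
    obtain ⟨hq1, hq2, hc3, hc4, hv2⟩ := hΨ (r+2) (Φ (r+1) d).2 hp2
    refine ⟨mart_add hp1 hq1, hq2, ?_, ?_, ?_⟩
    · rintro A ⟨⟨hAR, hAXY⟩, hAd⟩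
      by_cases hx : A ∈ X
      · exact S1_add_left hq1.1 (hc1 ⟨⟨hAR, hx⟩, hAd⟩)
      · have hy : A ∈ Y := hAXY.resolve_left hx
        exact S1_add_right hp1.1 (hc3 ⟨⟨hAR, hy⟩, hc2 ⟨⟨hAR, hx⟩, hAd⟩⟩)
    · rintro A ⟨⟨hAR, hAXY⟩, hAd⟩
      have hx : A ∉ X := fun h => hAXY (Or.inl h)
      have hy : A ∉ Y := fun h => hAXY (Or.inr h)
      exact hc4 ⟨⟨hAR, hy⟩, hc2 ⟨⟨hAR, hx⟩, hAd⟩⟩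
    · have := pow_half_step r
      simp only [hΘudef]
      linarith
  have hΘi : IsMeasurement ν R (X ∩ Y) Θi := by
    intro r d hd
    obtain ⟨hp1, hp2, hc1, hc2, hv⟩ := hΦ (r+1) d hd
    obtain ⟨hq1, hq2, hc3, hc4, hv2⟩ := hΨ (r+2) (Φ (r+1) d).1 hp1
    refine ⟨hq1, mart_add hp2 hq2, ?_, ?_, ?_⟩
    · rintro A ⟨⟨hAR, hx, hy⟩, hAd⟩
      exact hc3 ⟨⟨hAR, hy⟩, hc1 ⟨⟨hAR, hx⟩, hAd⟩⟩
    · rintro A ⟨⟨hAR, hnxy⟩, hAd⟩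
      by_cases hx : A ∈ X
      · have hy : A ∉ Y := fun h => hnxy ⟨hx, h⟩
        exact S1_add_right hp2.1 (hc4 ⟨⟨hAR, hy⟩, hc1 ⟨⟨hAR, hx⟩, hAd⟩⟩)
      · exact S1_add_left hq2.1 (hc2 ⟨⟨hAR, hx⟩, hAd⟩)
    · have := pow_half_step r
      simp only [hΘidef]
      linarith
  -- key inequality 1 (using Ψ): m(X∪Y) + m(X∩Y) ≤ m(X) + m(Y)
  have key1 : ∀ x ∈ covSet ν R X, ∀ y ∈ covSet ν R Y, ∀ s : ℕ,
      sInf (covSet ν R (X ∪ Y)) + sInf (covSet ν R (X ∩ Y)) ≤ x + y + (1/2)^s := by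
    rintro x ⟨p, hp, hcovp, rfl⟩ y ⟨q, hq, hcovq, rfl⟩ s
    obtain ⟨hq1, hq2, hc1, hc2, hv⟩ := hΨ s p hp
    have hiMem : (Ψ s p).1 [] ∈ covSet ν R (X ∩ Y) := by
      refine ⟨_, hq1, ?_, rfl⟩
      rintro A ⟨hAR, hx, hy⟩
      exact hc1 ⟨⟨hAR, hy⟩, hcovp ⟨hAR, hx⟩⟩
    have huMem : ((Ψ s p).2 [] + q []) ∈ covSet ν R (X ∪ Y) := by
      refine ⟨fun w => (Ψ s p).2 w + q w, mart_add hq2 hq, ?_, rfl⟩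
      rintro A ⟨hAR, hxy⟩
      by_cases hy : A ∈ Y
      · exact S1_add_right hq2.1 (hcovq ⟨hAR, hy⟩)
      · have hx : A ∈ X := hxy.resolve_right hy
        exact S1_add_left hq.1 (hc2 ⟨⟨hAR, hy⟩, hcovp ⟨hAR, hx⟩⟩)
    have h1 := csInf_le (covSet_bdd ν R (X ∪ Y)) huMem
    have h2 := csInf_le (covSet_bdd ν R (X ∩ Y)) hiMem
    linarith
  -- key inequality 2 (using Φ): m(X) + m(Y) ≤ m(X∪Y) + m(X∩Y)
  have key2 : ∀ x ∈ covSet ν R (X ∪ Y), ∀ y ∈ covSet ν R (X ∩ Y), ∀ s : ℕ,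
      sInf (covSet ν R X) + sInf (covSet ν R Y) ≤ x + y + (1/2)^s := by
    rintro x ⟨u, hu, hcovu, rfl⟩ y ⟨i, hi, hcovi, rfl⟩ s
    obtain ⟨hp1, hp2, hc1, hc2, hv⟩ := hΦ s u hu
    have hpMem : (Φ s u).1 [] ∈ covSet ν R X := by
      refine ⟨_, hp1, ?_, rfl⟩
      rintro A ⟨hAR, hx⟩
      exact hc1 ⟨⟨hAR, hx⟩, hcovu ⟨hAR, Or.inl hx⟩⟩
    have hqMem : ((Φ s u).2 [] + i []) ∈ covSet ν R Y := by
      refine ⟨fun w => (Φ s u).2 w + i w, mart_add hp2 hi, ?_, rfl⟩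
      rintro A ⟨hAR, hy⟩
      by_cases hx : A ∈ X
      · exact S1_add_right hp2.1 (hcovi ⟨hAR, hx, hy⟩)
      · exact S1_add_left hi.1 (hc2 ⟨⟨hAR, hx⟩, hcovu ⟨hAR, Or.inr hy⟩⟩)
    have h1 := csInf_le (covSet_bdd ν R X) hpMem
    have h2 := csInf_le (covSet_bdd ν R Y) hqMem
    linarith
  have e1 := mval_ineq (A := X) (B := Y) (C := X ∪ Y) (D := X ∩ Y) hν key1
  have e2 := mval_ineq (A := X ∪ Y) (B := X ∩ Y) (C := X) (D := Y) hν key2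
  have hmU := meas_eq hν hMC hΘu
  have hmI := meas_eq hν hMC hΘi
  have hmX := meas_eq hν hMC hΦ
  have hmY := meas_eq hν hMC hΨ
  have hsum : measInit Θu + measInit Θi = measInit Φ + measInit Ψ := by
    rw [hmU, hmI, hmX, hmY]; linarith
  refine ⟨Θu, Θi, hΘu, hΘi, hsum, ?_⟩
  intro hdis
  have hIe : X ∩ Y = ∅ := Set.disjoint_iff_inter_eq_empty.mp hdis
  have h0mem : (0:ℝ) ∈ covSet ν R (X ∩ Y) := by
    refine ⟨fun _ => 0, ⟨fun _ => le_refl 0, fun w => by simp⟩, ?_, rfl⟩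
    rw [hIe, Set.inter_empty]
    exact Set.empty_subset _
  have hle : sInf (covSet ν R (X ∩ Y)) ≤ 0 := csInf_le (covSet_bdd ν R (X ∩ Y)) h0mem
  have hge := covSet_inf_nonneg hν R (X ∩ Y)
  have hI0 : measInit Θi = 0 := by rw [hmI]; linarith
  linarith [hsum, hI0]
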